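/- Radial monotonicity of the effective Hamiltonian: Let H : ℝ^N × ℝ^N → ℝ be continuous, ℤ^N-periodic in its first variable, and coercive, and let H̄(P) denote the effective Hamiltonian, i.e., the unique critical value of the cell problem H(x, Du + P) = a on T^N. If H(x, p) ≤ H(x, k p) for all x ∈ ℝ^N, p ∈ ℝ^N and all real k ≥ 1, then H̄(P) ≤ H̄(k P) for all P ∈ ℝ^N and all real k ≥ 1. -/

import Mathlib

open Set Filter MeasureTheory

noncomputable section

abbrev Euc (N : ℕ) := EuclideanSpace ℝ (Fin N)

def intVec {N : ℕ} (z : Fin N → ℤ) : Euc N :=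
  (EuclideanSpace.equiv (Fin N) ℝ).symm (fun i => (z i : ℝ))

def IsZPeriodic {N : ℕ} (u : Euc N → ℝ) : Prop :=
  ∀ (x : Euc N) (z : Fin N → ℤ), u (x + intVec z) = u x

def IsZPeriodicH {N : ℕ} (H : Euc N → Euc N → ℝ) : Prop :=
  ∀ (x p : Euc N) (z : Fin N → ℤ), H (x + intVec z) p = H x p

def superDiff {N : ℕ} (u : Euc N → ℝ) (x : Euc N) : Set (Euc N) :=
  { q | ∃ φ : Euc N → ℝ, ContDiff ℝ 1 φ ∧ IsZPeriodic φ ∧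
        (∀ y, u y - φ y ≤ u x - φ x) ∧ q = gradient φ x }

def subDiff {N : ℕ} (u : Euc N → ℝ) (x : Euc N) : Set (Euc N) :=
  { q | ∃ φ : Euc N → ℝ, ContDiff ℝ 1 φ ∧ IsZPeriodic φ ∧
        (∀ y, u x - φ x ≤ u y - φ y) ∧ q = gradient φ x }

def IsCellSubsolution {N : ℕ} (H : Euc N → Euc N → ℝ) (P : Euc N) (a : ℝ) (u : Euc N → ℝ) : Prop :=
  ∀ x, ∀ q ∈ superDiff u x, H x (q + P) ≤ a

def IsCellSupersolution {N : ℕ} (H : Euc N → Euc N → ℝ) (P : Euc N) (a : ℝ) (u : Euc N → ℝ) : Prop :=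
  ∀ x, ∀ q ∈ subDiff u x, a ≤ H x (q + P)

def IsCellSolution {N : ℕ} (H : Euc N → Euc N → ℝ) (P : Euc N) (u : Euc N → ℝ) (a : ℝ) : Prop :=
  (∃ K : NNReal, LipschitzWith K u) ∧ IsZPeriodic u ∧
    IsCellSubsolution H P a u ∧ IsCellSupersolution H P a u

def IsCoerciveH {N : ℕ} (H : Euc N → Euc N → ℝ) : Prop :=
  ∀ C : ℝ, ∃ r : ℝ, ∀ x p : Euc N, r ≤ ‖p‖ → C ≤ H x p

/-! If `u` solves the cell problem at `P` with value `c`, monotonicity of `H` along rays makes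
`k • u` a supersolution at `k • P` with the same value, because `D⁻(k • u) = k • D⁻u`. It thus
suffices to show `c ≤ d` when, for the same `P`, a Lipschitz periodic `w` is a supersolution at
level `c` and a continuous periodic `v` a subsolution at level `d`. Doubling variables, maximise
`v y - w x - ℓ ρ(x - y)` over the torus, where `ρ x = ∑ᵢ (1 - cos 2πxᵢ)` is a smooth periodic
penalty. At a maximiser `(X, Y)` both test functions have the same gradient `p`, so that
`c ≤ H(X, p + P)` and `H(Y, p + P) ≤ d`; the Lipschitz bound keeps `p` bounded, and for large `ℓ`
the points `X` and `Y` are close modulo `ℤᴺ`, so uniform continuity of `H` gives `c ≤ d`. -/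

open scoped NNReal Real InnerProductSpace Gradient

section Gradient

variable {F : Type*} [NormedAddCommGroup F] [InnerProductSpace ℝ F] [CompleteSpace F]
  {f : F → ℝ} {f' x : F}

theorem HasGradientAt.const_mul (hf : HasGradientAt f f' x) (c : ℝ) :
    HasGradientAt (fun y => c * f y) (c • f') x := by
  rw [hasGradientAt_iff_hasFDerivAt] at hf ⊢
  simpa using hf.const_mul c

theorem HasGradientAt.comp_sub_const {a : F} (hf : HasGradientAt f f' (x - a)) :
    HasGradientAt (fun y => f (y - a)) f' x := by
  rw [hasGradientAt_iff_hasFDerivAt] at hf ⊢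
  exact (hasFDerivAt_comp_sub a).2 hf

theorem HasGradientAt.comp_const_sub {a : F} (hf : HasGradientAt f f' (a - x)) :
    HasGradientAt (fun y => f (a - y)) (-f') x := by
  rw [hasGradientAt_iff_hasFDerivAt] at hf ⊢
  refine (hf.comp x ((hasFDerivAt_id x).const_sub a)).congr_fderiv ?_
  ext y
  simp

theorem LipschitzWith.norm_gradient_le_of_forall_sub_le {u : F → ℝ} {K : ℝ≥0}
    (hu : LipschitzWith K u) (hf : DifferentiableAt ℝ f x)
    (hle : ∀ y, f y - f x ≤ u y - u x) : ‖∇ f x‖ ≤ K := by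
  set G := ∇ f x
  -- One-sided Fermat along the ray `t ↦ x + t • G`, `t ≥ 0`, gives `‖G‖ ^ 2 ≤ K * ‖G‖`.
  have hray : IsLocalMaxOn (fun t : ℝ => f (x + t • G) - K * ‖G‖ * t) (Ici 0) 0 := by
    refine IsMaxOn.localize fun t (ht : 0 ≤ t) => ?_
    have hlip : u (x + t • G) - u x ≤ K * ‖G‖ * t := by
      calc u (x + t • G) - u x ≤ K * dist (x + t • G) x :=
            (le_abs_self _).trans (hu.dist_le_mul _ _)
        _ = K * ‖G‖ * t := by
            rw [dist_eq_norm, add_sub_cancel_left, norm_smul, Real.norm_of_nonneg ht]; ring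
    have := hle (x + t • G)
    show f (x + t • G) - K * ‖G‖ * t ≤ f (x + (0 : ℝ) • G) - K * ‖G‖ * 0
    rw [zero_smul, add_zero, mul_zero, sub_zero]
    linarith
  have hderiv : HasDerivAt (fun t : ℝ => f (x + t • G) - K * ‖G‖ * t)
      (‖G‖ ^ 2 - K * ‖G‖) 0 := by
    have hline : HasDerivAt (fun t : ℝ => x + t • G) G 0 := by
      simpa using ((hasDerivAt_id (0 : ℝ)).smul_const G).const_add x
    have hfG : HasFDerivAt f (InnerProductSpace.toDual ℝ F G) (x + (0 : ℝ) • G) := by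
      rw [zero_smul, add_zero]
      exact hasGradientAt_iff_hasFDerivAt.1 hf.hasGradientAt
    have := (hfG.comp_hasDerivAt 0 hline).sub ((hasDerivAt_id (0 : ℝ)).const_mul (K * ‖G‖))
    rwa [InnerProductSpace.toDual_apply_apply, real_inner_self_eq_norm_sq, mul_one] at this
  have hsegment : segment ℝ (0 : ℝ) (0 + 1) ⊆ Ici 0 := by
    rw [segment_eq_Icc (by norm_num)]
    exact Icc_subset_Ici_self
  have := hray.hasFDerivWithinAt_nonpos hderiv.hasFDerivAt.hasFDerivWithinAt
    (mem_posTangentConeAt_of_segment_subset hsegment)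
  rw [ContinuousLinearMap.toSpanSingleton_apply, one_smul] at this
  nlinarith [norm_nonneg G, K.coe_nonneg]

end Gradient

section Torus

variable {N : ℕ}

theorem norm_add_intVec_neg_round_sq (x : Euc N) :
    ‖x + intVec (fun i => -round (x i))‖ ^ 2 = ∑ i, (x i - round (x i)) ^ 2 := by
  rw [EuclideanSpace.real_norm_sq_eq]
  simp [intVec, sub_eq_add_neg]

theorem exists_norm_add_intVec_le (x : Euc N) : ∃ z, ‖x + intVec z‖ ≤ √N := by
  refine ⟨fun i => -round (x i), Real.le_sqrt_of_sq_le ?_⟩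
  rw [norm_add_intVec_neg_round_sq]
  calc ∑ i, (x i - round (x i)) ^ 2 ≤ ∑ _i : Fin N, (1 : ℝ) :=
        Finset.sum_le_sum fun i _ => by
          have := abs_le.1 (abs_sub_round (x i))
          nlinarith
    _ = N := by simp

theorem exists_forall_le_of_isZPeriodic₂ {f : Euc N → Euc N → ℝ}
    (hf : Continuous fun q : Euc N × Euc N => f q.1 q.2)
    (h₁ : ∀ x y z, f (x + intVec z) y = f x y) (h₂ : ∀ x y z, f x (y + intVec z) = f x y) :
    ∃ a b, ∀ x y, f x y ≤ f a b := by
  have hK := (isCompact_closedBall (0 : Euc N) √N).prod (isCompact_closedBall (0 : Euc N) √N)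
  obtain ⟨⟨a, b⟩, -, hmax⟩ := hK.exists_isMaxOn ⟨(0, 0), by simp⟩ hf.continuousOn
  refine ⟨a, b, fun x y => ?_⟩
  obtain ⟨z, hz⟩ := exists_norm_add_intVec_le x
  obtain ⟨z', hz'⟩ := exists_norm_add_intVec_le y
  have := hmax (a := (x + intVec z, y + intVec z')) ⟨by simpa using hz, by simpa using hz'⟩
  simpa [h₁, h₂] using this

theorem IsZPeriodicH.exists_uniform_modulus {H : Euc N → Euc N → ℝ} (hHp : IsZPeriodicH H)
    (hHc : Continuous fun q : Euc N × Euc N => H q.1 q.2) (R : ℝ) {δ : ℝ} (hδ : 0 < δ) :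
    ∃ η > 0, ∀ x y p, ‖p‖ ≤ R → dist x y < η → dist (H x p) (H y p) < δ := by
  obtain ⟨η, hη, hUC⟩ := Metric.uniformContinuousOn_iff.1
    (((isCompact_closedBall (0 : Euc N) (√N + 1)).prod
      (isCompact_closedBall (0 : Euc N) R)).uniformContinuousOn_of_continuous hHc.continuousOn)
    δ hδ
  refine ⟨min η 1, by positivity, fun x y p hp hxy => ?_⟩
  obtain ⟨z, hz⟩ := exists_norm_add_intVec_le x
  have hy : ‖y + intVec z‖ ≤ √N + 1 := by
    calc ‖y + intVec z‖ = ‖(x + intVec z) - (x - y)‖ := by congr 1; abel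
      _ ≤ ‖x + intVec z‖ + dist x y := (norm_sub_le _ _).trans_eq (by rw [dist_eq_norm])
      _ ≤ √N + 1 := by linarith [min_le_right η 1]
  rw [← hHp x p z, ← hHp y p z]
  refine hUC (x + intVec z, p) ⟨by simpa using hz.trans (by linarith), by simpa using hp⟩
    (y + intVec z, p) ⟨by simpa using hy, by simpa using hp⟩ ?_
  rw [Prod.dist_eq, dist_self, dist_add_right]
  exact max_lt (hxy.trans_le (min_le_left _ _)) hη

end Torus

section Penalty

variable {N : ℕ}

def cosPenalty (t : ℝ) : ℝ := 1 - Real.cos (2 * π * t)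

def torusPenalty (x : Euc N) : ℝ := ∑ i, cosPenalty (x i)

theorem cosPenalty_add_intCast (t : ℝ) (n : ℤ) : cosPenalty (t + n) = cosPenalty t := by
  rw [cosPenalty, cosPenalty, mul_add, mul_comm (2 * π) (n : ℝ), Real.cos_add_int_mul_two_pi]

theorem eight_mul_sq_sub_round_le_cosPenalty (t : ℝ) : 8 * (t - round t) ^ 2 ≤ cosPenalty t := by
  have hs := abs_sub_round t
  have hcos := Real.cos_le_one_sub_mul_cos_sq (x := 2 * π * (t - round t)) (by
    rw [abs_mul, abs_of_pos Real.two_pi_pos]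
    nlinarith [Real.pi_pos])
  calc 8 * (t - round t) ^ 2 = 2 / π ^ 2 * (2 * π * (t - round t)) ^ 2 := by
        field_simp; ring
    _ ≤ cosPenalty (t - round t) := by rw [cosPenalty]; linarith
    _ = cosPenalty t := by rw [← cosPenalty_add_intCast _ (round t), sub_add_cancel]

@[fun_prop]
theorem contDiff_torusPenalty {n : WithTop ℕ∞} : ContDiff ℝ n (torusPenalty (N := N)) := by
  unfold torusPenalty cosPenalty
  fun_prop

theorem torusPenalty_zero : torusPenalty (0 : Euc N) = 0 := by
  simp [torusPenalty, cosPenalty]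

theorem torusPenalty_add_intVec (x : Euc N) (z : Fin N → ℤ) :
    torusPenalty (x + intVec z) = torusPenalty x :=
  Finset.sum_congr rfl fun i _ => cosPenalty_add_intCast (x i) (z i)

theorem torusPenalty_sub_intVec (x : Euc N) (z : Fin N → ℤ) :
    torusPenalty (x - intVec z) = torusPenalty x := by
  rw [← torusPenalty_add_intVec (x - intVec z) z, sub_add_cancel]

theorem exists_eight_mul_sq_norm_add_intVec_le_torusPenalty (x : Euc N) :
    ∃ z, 8 * ‖x + intVec z‖ ^ 2 ≤ torusPenalty x := by
  refine ⟨fun i => -round (x i), ?_⟩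
  rw [norm_add_intVec_neg_round_sq, Finset.mul_sum]
  exact Finset.sum_le_sum fun i _ => eight_mul_sq_sub_round_le_cosPenalty (x i)

end Penalty

section CellProblem

variable {N : ℕ} {H : Euc N → Euc N → ℝ} {P : Euc N} {u v : Euc N → ℝ} {c d : ℝ}

theorem LipschitzWith.norm_le_of_mem_subDiff {K : ℝ≥0} (hu : LipschitzWith K u) {x q : Euc N}
    (hq : q ∈ subDiff u x) : ‖q‖ ≤ K := by
  obtain ⟨φ, hφ, -, hmin, rfl⟩ := hq
  exact hu.norm_gradient_le_of_forall_sub_le (hφ.differentiable one_ne_zero x)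
    fun y => by linarith [hmin y]

theorem IsCellSupersolution.const_smul {k : ℝ} (hk : 0 < k)
    (hmono : ∀ x p, H x p ≤ H x (k • p)) (hu : IsCellSupersolution H P c u) :
    IsCellSupersolution H (k • P) c (k • u) := by
  rintro x _ ⟨φ, hφ, hφp, hmin, rfl⟩
  have hgrad : HasGradientAt (fun y => k⁻¹ * φ y) (k⁻¹ • ∇ φ x) x :=
    ((hφ.differentiable one_ne_zero x).hasGradientAt).const_mul k⁻¹
  have hsub : k⁻¹ • ∇ φ x ∈ subDiff u x := by
    refine ⟨fun y => k⁻¹ * φ y, contDiff_const.mul hφ, fun y z => by simp [hφp y z],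
      fun y => ?_, hgrad.gradient.symm⟩
    have := hmin y
    simp only [Pi.smul_apply, smul_eq_mul] at this
    rw [← mul_le_mul_iff_right₀ hk]
    field_simp
    linarith
  calc c ≤ H x (k⁻¹ • ∇ φ x + P) := hu x _ hsub
    _ ≤ H x (k • (k⁻¹ • ∇ φ x + P)) := hmono x _
    _ = H x (∇ φ x + k • P) := by rw [smul_add, smul_inv_smul₀ hk.ne']

theorem exists_mem_subDiff_mem_superDiff (hu : Continuous u) (hup : IsZPeriodic u)
    (hv : Continuous v) (hvp : IsZPeriodic v) (ℓ : ℝ) :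
    ∃ X Y p, p ∈ subDiff u X ∧ p ∈ superDiff v Y ∧ ℓ * torusPenalty (X - Y) ≤ u Y - u X := by
  obtain ⟨X, Y, hmax⟩ := exists_forall_le_of_isZPeriodic₂
    (f := fun x y => v y - u x - ℓ * torusPenalty (x - y))
    (by fun_prop)
    (fun x y z => by simp only [hup x z, add_sub_right_comm, torusPenalty_add_intVec])
    (fun x y z => by simp only [hvp y z, sub_add_eq_sub_sub, torusPenalty_sub_intVec])
  have hρ : HasGradientAt torusPenalty (∇ torusPenalty (X - Y)) (X - Y) :=
    (contDiff_torusPenalty.differentiable one_ne_zero _).hasGradientAt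
  refine ⟨X, Y, -ℓ • ∇ torusPenalty (X - Y), ?_, ?_, ?_⟩
  · refine ⟨fun x => -ℓ * torusPenalty (x - Y), by fun_prop, fun x z => ?_,
      fun x => by linarith [hmax x Y], (hρ.comp_sub_const.const_mul (-ℓ)).gradient.symm⟩
    simp only [add_sub_right_comm, torusPenalty_add_intVec]
  · refine ⟨fun y => ℓ * torusPenalty (X - y), by fun_prop, fun y z => ?_,
      fun y => by linarith [hmax X y], ?_⟩
    · simp only [sub_add_eq_sub_sub, torusPenalty_sub_intVec]
    · rw [(hρ.comp_const_sub.const_mul ℓ).gradient, smul_neg, neg_smul]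
  · have := hmax Y Y
    simp only [sub_self, torusPenalty_zero, mul_zero, sub_zero] at this
    linarith

theorem IsCellSupersolution.le_of_isCellSubsolution
    (hHc : Continuous fun q : Euc N × Euc N => H q.1 q.2) (hHp : IsZPeriodicH H) {K : ℝ≥0}
    (hu : LipschitzWith K u) (hup : IsZPeriodic u) (hsup : IsCellSupersolution H P c u)
    (hv : Continuous v) (hvp : IsZPeriodic v) (hsub : IsCellSubsolution H P d v) : c ≤ d := by
  refine le_of_forall_pos_le_add fun δ hδ => ?_
  obtain ⟨η, hη, hHη⟩ := hHp.exists_uniform_modulus hHc (K + ‖P‖) hδ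
  obtain ⟨a, b, hosc⟩ := exists_forall_le_of_isZPeriodic₂ (f := fun x y => u y - u x)
    (by have := hu.continuous; fun_prop) (fun x y z => by rw [hup x z])
    (fun x y z => by rw [hup y z])
  set B := u b - u a
  have hB : 0 ≤ B := by simpa using hosc a a
  obtain ⟨X, Y, p, hpX, hpY, hpen⟩ :=
    exists_mem_subDiff_mem_superDiff hu.continuous hup hv hvp ((B + 1) / (8 * η ^ 2))
  obtain ⟨z, hz⟩ := exists_eight_mul_sq_norm_add_intVec_le_torusPenalty (X - Y)
  -- `ℓ = (B + 1) / (8η²)` is chosen so that `8ℓ‖X - Y + z‖² ≤ ℓ ρ(X - Y) ≤ B`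
  -- forces `‖X - Y + z‖ < η`.
  have hclose : dist X (Y - intVec z) < η := by
    have hsq : (B + 1) * ‖X - Y + intVec z‖ ^ 2 ≤ B * η ^ 2 := by
      have := hpen.trans (hosc X Y)
      rw [div_mul_eq_mul_div, div_le_iff₀ (by positivity)] at this
      nlinarith
    rw [dist_eq_norm, sub_sub_eq_add_sub, add_sub_right_comm]
    exact lt_of_pow_lt_pow_left₀ 2 hη.le (by nlinarith)
  have hp : ‖p + P‖ ≤ K + ‖P‖ :=
    (norm_add_le _ _).trans (by gcongr; exact hu.norm_le_of_mem_subDiff hpX)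
  calc c ≤ H X (p + P) := hsup X p hpX
    _ ≤ H (Y - intVec z) (p + P) + δ := by
        linarith [abs_lt.1 (Real.dist_eq _ _ ▸ hHη X _ _ hp hclose)]
    _ = H Y (p + P) + δ := by rw [← hHp (Y - intVec z) (p + P) z, sub_add_cancel]
    _ ≤ d + δ := by linarith [hsub Y p hpY]

end CellProblem

theorem effective_hamiltonian_radial_monotone_general {N : ℕ}
    (H : Euc N → Euc N → ℝ)
    (hHc : Continuous fun q : Euc N × Euc N => H q.1 q.2)
    (hHp : IsZPeriodicH H)
    (hHmono : ∀ (x p : Euc N) (k : ℝ), 1 ≤ k → H x p ≤ H x (k • p)) :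
    ∀ (P : Euc N) (k : ℝ), 1 ≤ k →
      ∀ (u v : Euc N → ℝ) (c d : ℝ),
        IsCellSolution H P u c → IsCellSolution H (k • P) v d →
        c ≤ d := by
  rintro P k hk u v c d ⟨⟨K, hu⟩, hup, -, husup⟩ ⟨⟨_, hv⟩, hvp, hvsub, -⟩
  have hk₀ : 0 < k := one_pos.trans_le hk
  have hkusup : IsCellSupersolution H (k • P) c (k • u) :=
    husup.const_smul hk₀ fun x p => hHmono x p k hk
  exact hkusup.le_of_isCellSubsolution hHc hHp ((lipschitzWith_smul k).comp hu)
    (fun x z => congrArg (k • ·) (hup x z)) hv.continuous hvp hvsub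

/-- Radial monotonicity of the effective Hamiltonian. -/
theorem effective_hamiltonian_radial_monotone {N : ℕ} (hN : 1 ≤ N)
    (H : Euc N → Euc N → ℝ)
    (hHc : Continuous fun q : Euc N × Euc N => H q.1 q.2)
    (hHp : IsZPeriodicH H)
    (hHcoer : IsCoerciveH H)
    (hHmono : ∀ (x p : Euc N) (k : ℝ), 1 ≤ k → H x p ≤ H x (k • p)) :
    ∀ (P : Euc N) (k : ℝ), 1 ≤ k →
      ∀ (u v : Euc N → ℝ) (c d : ℝ),
        IsCellSolution H P u c → IsCellSolution H (k • P) v d →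
        c ≤ d :=
  effective_hamiltonian_radial_monotone_general H hHc hHp hHmono
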